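/- arXiv:1710.08227 — 7 statements merged into one kernel-verified Lean document; each statement's English description precedes it below -/
import Mathlib

section
/- Let T : X ⇉ X be union paracontracting with x* ∈ StrFix T, and let r := sup{δ > 0 : φ(x) ⊆ φ(x*) for all x ∈ B(x*; δ)} (which is positive). Then for any ε ∈ (0, r), ‖y − x*‖ ≤ ‖x − x*‖ holds whenever x ∈ B(x*; ε) and y ∈ T(x). Consequently, if x_0 ∈ B(x*; ε) and x_{n+1} ∈ T(x_n) for all n, then x_n ∈ B(x*; ε) for all n. -/
/-! Choose `d > ε` in the defining set of `r`. On `B(x*; d)` every operator active at `x` is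
active at `x*`, hence fixes `x*` because `T x* = {x*}`. A paracontraction never increases the
distance to one of its fixed points, so no step taken from `B(x*; ε)` moves away from `x*`, and
the ball is invariant. -/

open Filter Metric

theorem norm_sub_le_of_paracontracting {E : Type*} [SeminormedAddCommGroup E] {S : E → E}
    (hS : ∀ x, S x ≠ x → ∀ y, S y = y → ‖S x - y‖ < ‖x - y‖) (x : E) {y : E} (hy : S y = y) :
    ‖S x - y‖ ≤ ‖x - y‖ := by
  by_cases hx : S x = x
  · rw [hx]
  · exact (hS x hx y hy).le

theorem apply_eq_of_mem_active_of_eq_singleton {α ι : Type*} {Ti : ι → α → α}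
    {φ : α → Set ι} {T : α → Set α} (hT : ∀ x, T x = {y | ∃ i ∈ φ x, y = Ti i x}) {xstar : α}
    (hstr : T xstar = {xstar}) {i : ι} (hi : i ∈ φ xstar) : Ti i xstar = xstar := by
  have hmem : Ti i xstar ∈ T xstar := by
    rw [hT]
    exact ⟨i, hi, rfl⟩
  rwa [hstr] at hmem

theorem mem_of_mem_invariant {α : Type*} {T : α → Set α} {s : Set α}
    (hs : ∀ x ∈ s, ∀ y ∈ T x, y ∈ s) {xs : ℕ → α} (h0 : xs 0 ∈ s)
    (hstep : ∀ n, xs (n + 1) ∈ T (xs n)) (n : ℕ) : xs n ∈ s := by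
  induction n with
  | zero => exact h0
  | succ n ih => exact hs _ ih _ (hstep n)

theorem EReal.exists_mem_lt_of_lt_sSup_image_coe {s : Set ℝ} {ε : ℝ}
    (h : (ε : EReal) < sSup ((fun d : ℝ => (d : EReal)) '' s)) : ∃ d ∈ s, ε < d := by
  obtain ⟨_, ⟨d, hd, rfl⟩, hεd⟩ := lt_sSup_iff.mp h
  exact ⟨d, hd, EReal.coe_lt_coe_iff.mp hεd⟩

theorem stmt3_general {k : ℕ} {ι : Type*}
    (Ti : ι → EuclideanSpace ℝ (Fin k) → EuclideanSpace ℝ (Fin k))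
    (φ : EuclideanSpace ℝ (Fin k) → Set ι)
    (hpara : ∀ i, Continuous (Ti i) ∧
      ∀ x, Ti i x ≠ x → ∀ y, Ti i y = y → ‖Ti i x - y‖ < ‖x - y‖)
    (T : EuclideanSpace ℝ (Fin k) → Set (EuclideanSpace ℝ (Fin k)))
    (hT : ∀ x, T x = {y | ∃ i ∈ φ x, y = Ti i x})
    (xstar : EuclideanSpace ℝ (Fin k)) (hstr : T xstar = {xstar})
    (ε : ℝ)
    (hεr : (ε : EReal) < sSup ((fun d : ℝ => (d : EReal)) ''
      {d : ℝ | 0 < d ∧ ∀ x ∈ closedBall xstar d, φ x ⊆ φ xstar})) :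
    (∀ x ∈ closedBall xstar ε, ∀ y ∈ T x, ‖y - xstar‖ ≤ ‖x - xstar‖) ∧
      ∀ xs : ℕ → EuclideanSpace ℝ (Fin k), xs 0 ∈ closedBall xstar ε →
        (∀ n, xs (n + 1) ∈ T (xs n)) → ∀ n, xs n ∈ closedBall xstar ε := by
  obtain ⟨d, ⟨-, hactive⟩, hεd⟩ := EReal.exists_mem_lt_of_lt_sSup_image_coe hεr
  have hstep : ∀ x ∈ closedBall xstar ε, ∀ y ∈ T x, ‖y - xstar‖ ≤ ‖x - xstar‖ := by
    intro x hx y hy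
    rw [hT] at hy
    obtain ⟨i, hi, rfl⟩ := hy
    have hi_star : i ∈ φ xstar := hactive x (closedBall_subset_closedBall hεd.le hx) hi
    exact norm_sub_le_of_paracontracting (hpara i).2 x
      (apply_eq_of_mem_active_of_eq_singleton hT hstr hi_star)
  refine ⟨hstep, fun xs => mem_of_mem_invariant fun x hx y hy => ?_⟩
  exact mem_closedBall_iff_norm.mpr ((hstep x hx y hy).trans (mem_closedBall_iff_norm.mp hx))

/-- Under the union paracontracting setup with `xstar ∈ StrFix T` and
`r = sup {δ > 0 : φ(x) ⊆ φ(xstar) on B(xstar; δ)}`, for any `ε ∈ (0, r)` one has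
`‖y - xstar‖ ≤ ‖x - xstar‖` whenever `x ∈ B(xstar; ε)` and `y ∈ T x`; consequently
any iteration `x_{n+1} ∈ T(x_n)` started in `B(xstar; ε)` stays in `B(xstar; ε)`. -/
theorem stmt3 {k : ℕ} {ι : Type*} [Finite ι]
    (Ti : ι → EuclideanSpace ℝ (Fin k) → EuclideanSpace ℝ (Fin k))
    (φ : EuclideanSpace ℝ (Fin k) → Set ι)
    (hpara : ∀ i, Continuous (Ti i) ∧
      ∀ x, Ti i x ≠ x → ∀ y, Ti i y = y → ‖Ti i x - y‖ < ‖x - y‖)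
    (hne : ∀ x, (φ x).Nonempty)
    (hosc : ∀ (x : EuclideanSpace ℝ (Fin k)) (xs : ℕ → EuclideanSpace ℝ (Fin k))
        (is : ℕ → ι) (i : ι), Tendsto xs atTop (nhds x) →
        (∀ n, is n ∈ φ (xs n)) → (∀ᶠ n in atTop, is n = i) → i ∈ φ x)
    (T : EuclideanSpace ℝ (Fin k) → Set (EuclideanSpace ℝ (Fin k)))
    (hT : ∀ x, T x = {y | ∃ i ∈ φ x, y = Ti i x})
    (xstar : EuclideanSpace ℝ (Fin k)) (hstr : T xstar = {xstar})
    (ε : ℝ) (hε0 : 0 < ε)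
    (hεr : (ε : EReal) < sSup ((fun d : ℝ => (d : EReal)) ''
      {d : ℝ | 0 < d ∧ ∀ x ∈ closedBall xstar d, φ x ⊆ φ xstar})) :
    (∀ x ∈ closedBall xstar ε, ∀ y ∈ T x, ‖y - xstar‖ ≤ ‖x - xstar‖) ∧
      ∀ xs : ℕ → EuclideanSpace ℝ (Fin k), xs 0 ∈ closedBall xstar ε →
        (∀ n, xs (n + 1) ∈ T (xs n)) → ∀ n, xs n ∈ closedBall xstar ε :=
  stmt3_general Ti φ hpara T hT xstar hstr ε hεr
end

section
/- (Elsner–Koltracht–Neumann) Let {T_j}_{j∈J} be a finite collection of paracontracting operators on X = ℝ^k with a common fixed point, let (j_n) be an admissible control (every j ∈ J appears infinitely often), and define z_{n+1} = T_{j_n}(z_n) from any z_0. Then (z_n) converges to a point in ⋂_{j∈J} Fix T_j. -/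
open Filter Function Topology

/-! Every common fixed point `p` is approached monotonically, so `dist (z n) p` decreases to some
`d`, and a cluster point `zbar` of the bounded orbit has `dist zbar p = d` as well. If some `T j`
moved `zbar`, look at the first time after a visit near `zbar` at which a map moving `zbar` is
applied: up to then the maps fix `zbar`, so the orbit is still near `zbar`. As `J` is finite, one
such map `T j` occurs at infinitely many of these times, and by continuity and paracontraction it
would push the orbit strictly closer to `p` than `d`. Hence `zbar` is a common fixed point, and
the same monotonicity, now towards `zbar`, gives convergence. -/

section

variable {α : Type*} [MetricSpace α]

structure Paracontracting (T : α → α) : Prop where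
  continuous : Continuous T
  dist_lt : ∀ ⦃x y⦄, ¬IsFixedPt T x → IsFixedPt T y → dist (T x) y < dist x y

namespace Paracontracting

variable {T : α → α}

theorem dist_le (hT : Paracontracting T) (x : α) {y : α} (hy : IsFixedPt T y) :
    dist (T x) y ≤ dist x y := by
  by_cases hx : IsFixedPt T x
  · rw [hx.eq]
  · exact (hT.dist_lt hx hy).le

theorem isFixedPt_of_frequently_le {ι : Type*} {l : Filter ι} (hT : Paracontracting T)
    {x : ι → α} {a p : α} (hp : IsFixedPt T p) (hx : Tendsto x l (𝓝 a))
    (hfreq : ∃ᶠ i in l, dist a p ≤ dist (T (x i)) p) : IsFixedPt T a := by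
  have hlim : Tendsto (fun i => dist (T (x i)) p) l (𝓝 (dist (T a) p)) :=
    ((hT.continuous.tendsto a).comp hx).dist tendsto_const_nhds
  by_contra ha
  exact (hT.dist_lt ha hp).not_ge (ge_of_tendsto_of_frequently hlim hfreq)

end Paracontracting

section Orbit

variable {J : Type*} {T : J → α → α} {jc : ℕ → J} {z : ℕ → α}

theorem dist_orbit_le_of_forall_isFixedPt (hT : ∀ j, Paracontracting (T j))
    (hz : ∀ n, z (n + 1) = T (jc n) (z n)) {y : α} {a b : ℕ} (hab : a ≤ b)
    (hy : ∀ n, a ≤ n → n < b → IsFixedPt (T (jc n)) y) : dist (z b) y ≤ dist (z a) y := by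
  induction b, hab using Nat.le_induction with
  | base => exact le_rfl
  | succ b hab ih =>
    calc dist (z (b + 1)) y = dist (T (jc b) (z b)) y := by rw [hz]
      _ ≤ dist (z b) y := (hT _).dist_le _ (hy b hab b.lt_succ_self)
      _ ≤ dist (z a) y := ih fun n han hnb => hy n han (hnb.trans b.lt_succ_self)

theorem antitone_dist_orbit (hT : ∀ j, Paracontracting (T j))
    (hz : ∀ n, z (n + 1) = T (jc n) (z n)) {p : α} (hp : ∀ j, IsFixedPt (T j) p) :
    Antitone fun n => dist (z n) p :=
  antitone_nat_of_succ_le fun n =>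
    dist_orbit_le_of_forall_isFixedPt hT hz n.le_succ fun m _ _ => hp (jc m)

/-- Replacing each time `φ i` by the first time `ψ i ≥ φ i` at which a map moving `y` is applied
keeps the orbit at least as close to `y`. -/
theorem exists_tendsto_orbit_of_not_isFixedPt {ι : Type*} {l : Filter ι}
    (hT : ∀ j, Paracontracting (T j)) (hz : ∀ n, z (n + 1) = T (jc n) (z n)) {y : α}
    (hmove : ∀ N, ∃ n ≥ N, ¬IsFixedPt (T (jc n)) y) {φ : ι → ℕ}
    (hφ : Tendsto (z ∘ φ) l (𝓝 y)) :
    ∃ ψ : ι → ℕ, (∀ i, ¬IsFixedPt (T (jc (ψ i))) y) ∧ Tendsto (z ∘ ψ) l (𝓝 y) := by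
  classical
  let ψ i := Nat.find (hmove (φ i))
  have hψ i : φ i ≤ ψ i ∧ ¬IsFixedPt (T (jc (ψ i))) y := Nat.find_spec (hmove (φ i))
  have hclose i : dist (z (ψ i)) y ≤ dist (z (φ i)) y :=
    dist_orbit_le_of_forall_isFixedPt hT hz (hψ i).1 fun n hn hnψ => by
      by_contra h
      exact Nat.find_min (hmove (φ i)) hnψ ⟨hn, h⟩
  refine ⟨ψ, fun i => (hψ i).2, ?_⟩
  rw [tendsto_iff_dist_tendsto_zero] at hφ ⊢
  exact squeeze_zero (fun _ => dist_nonneg) hclose hφ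

theorem tendsto_orbit_of_paracontracting [ProperSpace α] [Finite J]
    (hT : ∀ j, Paracontracting (T j)) (hz : ∀ n, z (n + 1) = T (jc n) (z n))
    (hadm : ∀ j N, ∃ n ≥ N, jc n = j) {p : α} (hp : ∀ j, IsFixedPt (T j) p) :
    ∃ zbar, (∀ j, IsFixedPt (T j) zbar) ∧ Tendsto z atTop (𝓝 zbar) := by
  obtain ⟨zbar, -, φ, hφ, hzφ⟩ := (isCompact_closedBall p (dist (z 0) p)).tendsto_subseq
    fun n => Metric.mem_closedBall.2 (antitone_dist_orbit hT hz hp n.zero_le)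
  have hdist_lim : Tendsto (fun n => dist (z n) p) atTop (𝓝 (dist zbar p)) :=
    (tendsto_iff_tendsto_subseq_of_antitone (antitone_dist_orbit hT hz hp)
      hφ.tendsto_atTop).2 (hzφ.dist tendsto_const_nhds)
  have hfix : ∀ j, IsFixedPt (T j) zbar := by
    by_contra! ⟨j₀, hj₀⟩
    obtain ⟨ψ, hψ, hzψ⟩ := exists_tendsto_orbit_of_not_isFixedPt (l := atTop) hT hz
      (fun N => (hadm j₀ N).imp fun n ⟨hn, hj⟩ => ⟨hn, hj ▸ hj₀⟩) hzφ
    obtain ⟨j, hj⟩ : ∃ j, ∃ᶠ i in atTop, jc (ψ i) = j :=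
      frequently_exists.1 (Frequently.of_forall fun i => ⟨_, rfl⟩)
    have hjfix : IsFixedPt (T j) zbar :=
      (hT j).isFixedPt_of_frequently_le (hp j) hzψ <| hj.mono fun i hi => by
        rw [← hi, comp_apply, ← hz]
        exact (antitone_dist_orbit hT hz hp).le_of_tendsto hdist_lim _
    obtain ⟨i, hi⟩ := hj.exists
    exact hψ i (hi ▸ hjfix)
  refine ⟨zbar, hfix, ?_⟩
  rw [tendsto_iff_dist_tendsto_zero, tendsto_iff_tendsto_subseq_of_antitone
    (antitone_dist_orbit hT hz hfix) hφ.tendsto_atTop, ← dist_self zbar]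
  exact hzφ.dist tendsto_const_nhds

end Orbit

end

theorem stmt5_general {k : ℕ} {J : Type*} [Finite J]
    (T : J → EuclideanSpace ℝ (Fin k) → EuclideanSpace ℝ (Fin k))
    (hpara : ∀ j, Continuous (T j) ∧
      ∀ x, T j x ≠ x → ∀ y, T j y = y → ‖T j x - y‖ < ‖x - y‖)
    (hcommon : ∃ p, ∀ j, T j p = p)
    (jc : ℕ → J) (hadm : ∀ j : J, ∀ N : ℕ, ∃ n ≥ N, jc n = j)
    (z : ℕ → EuclideanSpace ℝ (Fin k))
    (hz : ∀ n, z (n + 1) = T (jc n) (z n)) :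
    ∃ zbar, (∀ j, T j zbar = zbar) ∧ Tendsto z atTop (nhds zbar) := by
  have hT j : Paracontracting (T j) :=
    ⟨(hpara j).1, fun x y hx hy => by simpa only [dist_eq_norm] using (hpara j).2 x hx y hy⟩
  obtain ⟨p, hp⟩ := hcommon
  exact tendsto_orbit_of_paracontracting hT hz hadm hp

/-- Elsner–Koltracht–Neumann: a finite family of paracontracting
operators with a common fixed point, applied with admissible control (every index
occurs infinitely often), produces a convergent sequence whose limit is a common
fixed point. -/
theorem stmt5 {k : ℕ} {J : Type*} [Finite J] [Nonempty J]
    (T : J → EuclideanSpace ℝ (Fin k) → EuclideanSpace ℝ (Fin k))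
    (hpara : ∀ j, Continuous (T j) ∧
      ∀ x, T j x ≠ x → ∀ y, T j y = y → ‖T j x - y‖ < ‖x - y‖)
    (hcommon : ∃ p, ∀ j, T j p = p)
    (jc : ℕ → J) (hadm : ∀ j : J, ∀ N : ℕ, ∃ n ≥ N, jc n = j)
    (z : ℕ → EuclideanSpace ℝ (Fin k))
    (hz : ∀ n, z (n + 1) = T (jc n) (z n)) :
    ∃ zbar, (∀ j, T j zbar = zbar) ∧ Tendsto z atTop (nhds zbar) :=
  stmt5_general T hpara hcommon jc hadm z hz
end

section
/- Let T : X ⇉ X be union paracontracting, and suppose there exists x* ∈ StrFix T with φ(x*) = I (the whole index set). Then for any initial point x_0 ∈ X, any sequence with x_{n+1} ∈ T(x_n) for all n converges to a point x̄ ∈ Fix T. -/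
/-!
Since `xstar` is a strong fixed point with `φ xstar = I`, it is a common fixed point of all the
`Tᵢ`, so the iterates are Fejér monotone with respect to it: they stay bounded and
`dist (x n) xstar` converges to some `d`. At a limit `z` of iterates that are all followed by the
same operator `Tᵢ`, both `z` and `Tᵢ z` lie at distance `d` from `xstar`, so `z` is fixed by `Tᵢ`
by paracontractivity. Hence near a cluster point `y` only operators fixing `y` are applied
eventually, and these do not increase the distance to `y`: the iterates are trapped in small balls
around `y` and converge to it. Outer semicontinuity of `φ` then puts `y` in `Fix T`.
-/

open Filter Metric Topology

def IsParacontracting {X : Type*} [MetricSpace X] (f : X → X) : Prop :=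
  Continuous f ∧ ∀ x, f x ≠ x → ∀ y, f y = y → dist (f x) y < dist x y

theorem IsParacontracting.dist_le {X : Type*} [MetricSpace X] {f : X → X}
    (hf : IsParacontracting f) (x : X) {y : X} (hy : f y = y) : dist (f x) y ≤ dist x y := by
  rcases eq_or_ne (f x) x with h | h
  · rw [h]
  · exact (hf.2 x h y hy).le

theorem le_of_succ_le_of_le_threshold {u : ℕ → ℝ} {N n₀ : ℕ} {ε : ℝ}
    (hstep : ∀ n ≥ N, u n ≤ ε → u (n + 1) ≤ u n) (hn₀ : N ≤ n₀) (hu : u n₀ ≤ ε) :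
    ∀ n ≥ n₀, u n ≤ u n₀ := by
  refine Nat.le_induction le_rfl fun n hn ih => ?_
  exact (hstep n (hn₀.trans hn) (ih.trans hu)).trans ih

namespace IsParacontracting

variable {X ι : Type*} [MetricSpace X] {T : ι → X → X} {c : ℕ → ι} {x : ℕ → X} {p : X}
  (hT : ∀ i, IsParacontracting (T i)) (hp : ∀ i, T i p = p) (hx : ∀ n, x (n + 1) = T (c n) (x n))
include hT hp hx

theorem antitone_dist_iterate : Antitone fun n => dist (x n) p :=
  antitone_nat_of_succ_le fun n => hx n ▸ (hT (c n)).dist_le (x n) (hp (c n))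

theorem apply_eq_self_of_tendsto_subseq {ψ : ℕ → ℕ} {i : ι} {z : X}
    (hψ : Tendsto ψ atTop atTop) (hc : ∀ j, c (ψ j) = i) (hz : Tendsto (x ∘ ψ) atTop (𝓝 z)) :
    T i z = z := by
  have hd := tendsto_atTop_ciInf (antitone_dist_iterate hT hp hx) ⟨0, Set.forall_mem_range.2 fun _ => dist_nonneg⟩
  set d := ⨅ n, dist (x n) p
  have hzd : dist z p = d :=
    tendsto_nhds_unique (hz.dist tendsto_const_nhds) (hd.comp hψ)
  have hnext : Tendsto (fun j => x (ψ j + 1)) atTop (𝓝 (T i z)) := by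
    simpa only [hx, hc, Function.comp_def] using ((hT i).1.tendsto z).comp hz
  have hTzd : dist (T i z) p = d :=
    tendsto_nhds_unique (hnext.dist tendsto_const_nhds)
      (hd.comp ((tendsto_add_atTop_nat 1).comp hψ))
  by_contra hne
  exact (hTzd.trans hzd.symm).not_lt ((hT i).2 z hne p (hp i))

variable [ProperSpace X]

theorem eventually_ne_of_apply_ne {i : ι} {y : X} (hy : T i y ≠ y) :
    ∃ ε > 0, ∀ᶠ n in atTop, dist (x n) y ≤ ε → c n ≠ i := by
  have hopen : IsOpen {z | T i z = z}ᶜ := (isClosed_eq (hT i).1 continuous_id).isOpen_compl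
  obtain ⟨ε, hε, hball⟩ := Metric.isOpen_iff.1 hopen y hy
  refine ⟨ε / 2, half_pos hε, ?_⟩
  by_contra hfreq
  have hfreq : ∃ᶠ n in atTop, dist (x n) y ≤ ε / 2 ∧ c n = i := by
    simpa only [not_eventually, Classical.not_imp, not_not] using hfreq
  obtain ⟨ψ, hψ, hψP⟩ := extraction_of_frequently_atTop hfreq
  choose hψε hψi using hψP
  obtain ⟨z, hzy, ψ', hψ', hz⟩ := (isCompact_closedBall y (ε / 2)).tendsto_subseq hψε
  have hfix := apply_eq_self_of_tendsto_subseq hT hp hx (hψ.comp hψ').tendsto_atTop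
    (fun j => hψi (ψ' j)) hz
  exact hball (closedBall_subset_ball (half_lt_self hε) hzy) hfix

theorem eventually_nhdsGT_eventually_apply_eq_self [Finite ι] (y : X) :
    ∀ᶠ ε in 𝓝[>] (0 : ℝ), ∀ᶠ n in atTop, dist (x n) y ≤ ε → T (c n) y = y := by
  have h : ∀ i, ∀ᶠ ε in 𝓝[>] (0 : ℝ), ∀ᶠ n in atTop, dist (x n) y ≤ ε → c n = i → T i y = y := by
    intro i
    by_cases hy : T i y = y
    · exact .of_forall fun _ => .of_forall fun _ _ _ => hy
    obtain ⟨ε, hε, hfar⟩ := eventually_ne_of_apply_ne hT hp hx hy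
    filter_upwards [Ioc_mem_nhdsGT hε] with ε' hε'
    filter_upwards [hfar] with n hn hnε' hci
    exact absurd hci (hn (hnε'.trans hε'.2))
  filter_upwards [eventually_all.2 h] with ε hε
  filter_upwards [eventually_all.2 hε] with n hn hnε
  exact hn (c n) hnε rfl

theorem exists_tendsto_iterate [Finite ι] : ∃ y, Tendsto x atTop (𝓝 y) := by
  have hbdd : map x atTop ≤ 𝓟 (closedBall p (dist (x 0) p)) :=
    tendsto_principal.2 (.of_forall fun n => antitone_dist_iterate hT hp hx (Nat.zero_le n))
  obtain ⟨y, -, hy⟩ := (isCompact_closedBall p _).exists_mapClusterPt hbdd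
  refine ⟨y, Metric.tendsto_atTop.2 fun δ hδ => ?_⟩
  obtain ⟨ε, hεfix, hε, hεδ⟩ :=
    ((eventually_nhdsGT_eventually_apply_eq_self hT hp hx y).and (Ioo_mem_nhdsGT hδ)).exists
  obtain ⟨N, hN⟩ := eventually_atTop.1 hεfix
  have hstep : ∀ n ≥ N, dist (x n) y ≤ ε → dist (x (n + 1)) y ≤ dist (x n) y :=
    fun n hn hnε => hx n ▸ (hT (c n)).dist_le (x n) (hN n hn hnε)
  obtain ⟨n₀, hn₀ε, hn₀⟩ :=
    ((hy.frequently (closedBall_mem_nhds y hε)).and_eventually (eventually_ge_atTop N)).exists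
  refine ⟨n₀, fun n hn => ?_⟩
  calc dist (x n) y ≤ dist (x n₀) y := le_of_succ_le_of_le_threshold hstep hn₀ hn₀ε n hn
    _ ≤ ε := hn₀ε
    _ < δ := hεδ

end IsParacontracting

theorem stmt6_general {k : ℕ} {ι : Type*} [Finite ι]
    (Ti : ι → EuclideanSpace ℝ (Fin k) → EuclideanSpace ℝ (Fin k))
    (φ : EuclideanSpace ℝ (Fin k) → Set ι)
    (hpara : ∀ i, Continuous (Ti i) ∧
      ∀ x, Ti i x ≠ x → ∀ y, Ti i y = y → ‖Ti i x - y‖ < ‖x - y‖)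
    (hosc : ∀ (x : EuclideanSpace ℝ (Fin k)) (xs : ℕ → EuclideanSpace ℝ (Fin k))
        (is : ℕ → ι) (i : ι), Tendsto xs atTop (nhds x) →
        (∀ n, is n ∈ φ (xs n)) → (∀ᶠ n in atTop, is n = i) → i ∈ φ x)
    (T : EuclideanSpace ℝ (Fin k) → Set (EuclideanSpace ℝ (Fin k)))
    (hT : ∀ x, T x = {y | ∃ i ∈ φ x, y = Ti i x})
    (xstar : EuclideanSpace ℝ (Fin k)) (hstr : T xstar = {xstar})
    (hfull : φ xstar = Set.univ)
    (xs : ℕ → EuclideanSpace ℝ (Fin k)) (hxs : ∀ n, xs (n + 1) ∈ T (xs n)) :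
    ∃ xbar, xbar ∈ T xbar ∧ Tendsto xs atTop (nhds xbar) := by
  have hTi : ∀ i, IsParacontracting (Ti i) := fun i =>
    ⟨(hpara i).1, by simpa only [dist_eq_norm] using (hpara i).2⟩
  have hfix : ∀ i, Ti i xstar = xstar := fun i => by
    simpa [hstr] using (hT xstar).ge ⟨i, hfull ▸ Set.mem_univ i, rfl⟩
  choose c hc hstep using fun n => (hT (xs n)).le (hxs n)
  obtain ⟨y, hy⟩ := IsParacontracting.exists_tendsto_iterate hTi hfix hstep
  obtain ⟨i, hi⟩ : ∃ i, ∃ᶠ n in atTop, c n = i := by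
    by_contra! h
    obtain ⟨n, hn⟩ := (eventually_all.2 h).exists
    exact hn (c n) rfl
  obtain ⟨ψ, hψ, hψi⟩ := extraction_of_frequently_atTop hi
  have hyψ := hy.comp hψ.tendsto_atTop
  refine ⟨y, (hT y).ge ⟨i, hosc y _ _ i hyψ (fun n => hc (ψ n)) (.of_forall hψi), ?_⟩, hy⟩
  exact (IsParacontracting.apply_eq_self_of_tendsto_subseq hTi hfix hstep hψ.tendsto_atTop
    hψi hyψ).symm

/-- Global convergence: if `T` is union paracontracting and there is a
strong fixed point `xstar` with `φ(xstar) = I` (the whole index set), then from any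
initial point every iteration `x_{n+1} ∈ T(x_n)` converges to a point of `Fix T`. -/
theorem stmt6 {k : ℕ} {ι : Type*} [Finite ι]
    (Ti : ι → EuclideanSpace ℝ (Fin k) → EuclideanSpace ℝ (Fin k))
    (φ : EuclideanSpace ℝ (Fin k) → Set ι)
    (hpara : ∀ i, Continuous (Ti i) ∧
      ∀ x, Ti i x ≠ x → ∀ y, Ti i y = y → ‖Ti i x - y‖ < ‖x - y‖)
    (hne : ∀ x, (φ x).Nonempty)
    (hosc : ∀ (x : EuclideanSpace ℝ (Fin k)) (xs : ℕ → EuclideanSpace ℝ (Fin k))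
        (is : ℕ → ι) (i : ι), Tendsto xs atTop (nhds x) →
        (∀ n, is n ∈ φ (xs n)) → (∀ᶠ n in atTop, is n = i) → i ∈ φ x)
    (T : EuclideanSpace ℝ (Fin k) → Set (EuclideanSpace ℝ (Fin k)))
    (hT : ∀ x, T x = {y | ∃ i ∈ φ x, y = Ti i x})
    (xstar : EuclideanSpace ℝ (Fin k)) (hstr : T xstar = {xstar})
    (hfull : φ xstar = Set.univ)
    (xs : ℕ → EuclideanSpace ℝ (Fin k)) (hxs : ∀ n, xs (n + 1) ∈ T (xs n)) :
    ∃ xbar, xbar ∈ T xbar ∧ Tendsto xs atTop (nhds xbar) :=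
  stmt6_general Ti φ hpara hosc T hT xstar hstr hfull xs hxs
end

section
/- Let T be the forward-backward operator T(x) = P_A(x − γ∇f(x)) for sparsity-constrained minimization min{f(x) : ‖x‖_0 ≤ s}, with representation T(x) = {(P_{A_I}∘Q)(x) : I ∈ φ(Q(x))}. If x ∈ Fix T, then there exists I ∈ φ(Q(x)) with x ∈ argmin_{z ∈ A_I} f(z), and moreover min_{i∈I} |x_i| ≥ γ‖∇f(x)‖_∞. -/
/-- Coordinatewise projector onto the subspace of vectors supported on `I`. -/
noncomputable def proj {k : ℕ} (I : Finset (Fin k))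
    (x : EuclideanSpace ℝ (Fin k)) : EuclideanSpace ℝ (Fin k) :=
  WithLp.toLp 2 (fun i => if i ∈ I then x i else 0)

/-- `I` is an active (nearest) `s`-subset for the point `y`: `P_{A_I} y` realises the
distance from `y` to `A = ⋃_{J card s} A_J`. -/
def activeSel {k : ℕ} (s : ℕ) (I : Finset (Fin k)) (y : EuclideanSpace ℝ (Fin k)) : Prop :=
  I.card = s ∧ ∀ J : Finset (Fin k), J.card = s → ‖y - proj I y‖ ≤ ‖y - proj J y‖

/-!
At a fixed point `x = P_{A_I}(x - γ∇f(x))` with `γ ≠ 0`, `x` vanishes off `I` and `∇f(x)`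
vanishes on `I`. Hence `∇f(x)` is orthogonal to `A_I - x`, and the first-order characterisation
of convexity makes `x` a minimiser of `f` on `A_I`. For `i ∈ I` and `j ∉ I`, exchanging `i` for
`j` cannot bring the projection of `y = x - γ∇f(x)` closer to `y`, which forces `|y_j| ≤ |y_i|`,
i.e. `γ |∂_j f(x)| ≤ |x_i|`.
-/

open Finset

theorem ConvexOn.add_fderiv_sub_le {E : Type*} [NormedAddCommGroup E] [NormedSpace ℝ E]
    {s : Set E} {f : E → ℝ} {f' : E →L[ℝ] ℝ} {x z : E} (hf : ConvexOn ℝ s f)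
    (hx : x ∈ s) (hz : z ∈ s) (hfx : HasFDerivAt f f' x) : f x + f' (z - x) ≤ f z := by
  set ℓ : ℝ →ᵃ[ℝ] E := AffineMap.lineMap x z
  have hline : ConvexOn ℝ (ℓ ⁻¹' s) (f ∘ ℓ) := hf.comp_affineMap ℓ
  rw [← AffineMap.lineMap_apply_zero (k := ℝ) x z] at hfx
  have hderiv : HasDerivAt (f ∘ ℓ) (f' (z - x)) 0 :=
    hfx.comp_hasDerivAt 0 AffineMap.hasDerivAt_lineMap
  have hslope := hline.le_slope_of_hasDerivAt (by simpa [ℓ]) (by simpa [ℓ]) zero_lt_one hderiv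
  simp only [slope, sub_zero, inv_one, one_smul, Function.comp_apply, ℓ,
    AffineMap.lineMap_apply_one, AffineMap.lineMap_apply_zero, vsub_eq_sub] at hslope
  linarith

section Sparse

variable {k : ℕ}

theorem proj_apply (I : Finset (Fin k)) (x : EuclideanSpace ℝ (Fin k)) (i : Fin k) :
    proj I x i = if i ∈ I then x i else 0 := rfl

theorem norm_sub_proj_sq_add_sum_sq (I : Finset (Fin k)) (y : EuclideanSpace ℝ (Fin k)) :
    ‖y - proj I y‖ ^ 2 + ∑ i ∈ I, y i ^ 2 = ‖y‖ ^ 2 := by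
  rw [EuclideanSpace.real_norm_sq_eq, EuclideanSpace.real_norm_sq_eq, ← Fintype.sum_ite_mem I,
    ← sum_add_distrib]
  refine sum_congr rfl fun i _ => ?_
  simp only [PiLp.sub_apply, proj_apply]
  split_ifs <;> ring

theorem eq_proj_sub_smul_iff {I : Finset (Fin k)} {x g : EuclideanSpace ℝ (Fin k)} {γ : ℝ}
    (hγ : γ ≠ 0) :
    x = proj I (x - γ • g) ↔ (∀ i ∉ I, x i = 0) ∧ ∀ i ∈ I, g i = 0 := by
  simp only [PiLp.ext_iff, proj_apply, PiLp.sub_apply, PiLp.smul_apply, smul_eq_mul]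
  rw [← forall_and]
  refine forall_congr' fun i => ?_
  by_cases hi : i ∈ I <;> simp [hi, hγ, eq_comm (a := x i)]

theorem activeSel.abs_le {s : ℕ} {I : Finset (Fin k)} {y : EuclideanSpace ℝ (Fin k)}
    (h : activeSel s I y) {i j : Fin k} (hi : i ∈ I) (hj : j ∉ I) : |y j| ≤ |y i| := by
  set J := insert j (I.erase i)
  have hjJ : j ∉ I.erase i := fun h => hj (mem_of_mem_erase h)
  have hJ : J.card = s := by rw [card_insert_of_notMem hjJ, card_erase_add_one hi, h.1]
  have hswap : ∑ m ∈ J, y m ^ 2 + y i ^ 2 = ∑ m ∈ I, y m ^ 2 + y j ^ 2 := by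
    rw [sum_insert hjJ, ← add_sum_erase I _ hi]; ring
  have hle : ‖y - proj I y‖ ^ 2 ≤ ‖y - proj J y‖ ^ 2 := by gcongr; exact h.2 J hJ
  rw [← sq_le_sq]
  linarith [norm_sub_proj_sq_add_sum_sq I y, norm_sub_proj_sq_add_sum_sq J y]

end Sparse

/-- If `x` is a fixed point of the forward-backward operator
`T(x) = {P_{A_I}(Q x) : I ∈ φ(Q x)}`, `Q = Id - γ∇f`, then there is `I ∈ φ(Q x)` with
`x ∈ argmin_{A_I} f` and `min_{i∈I} |x_i| ≥ γ‖∇f(x)‖_∞`. -/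
theorem stmt12 {k s : ℕ} (f : EuclideanSpace ℝ (Fin k) → ℝ)
    (hconv : ConvexOn ℝ Set.univ f) (hdiff : Differentiable ℝ f)
    (γ : ℝ) (hγ : 0 < γ)
    (x : EuclideanSpace ℝ (Fin k))
    (hfix : ∃ I : Finset (Fin k), activeSel s I (x - γ • gradient f x) ∧
      x = proj I (x - γ • gradient f x)) :
    ∃ I : Finset (Fin k), activeSel s I (x - γ • gradient f x) ∧
      (∀ i ∉ I, x i = 0) ∧
      (∀ z : EuclideanSpace ℝ (Fin k), (∀ i ∉ I, z i = 0) → f x ≤ f z) ∧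
      ∀ i ∈ I, ∀ j, γ * |gradient f x j| ≤ |x i| := by
  obtain ⟨I, hact, hx⟩ := hfix
  obtain ⟨hxI, hgI⟩ := (eq_proj_sub_smul_iff hγ.ne').1 hx
  refine ⟨I, hact, hxI, fun z hz => ?_, fun i hi j => ?_⟩
  · have horth : inner ℝ (gradient f x) (z - x) = 0 := by
      rw [PiLp.inner_apply]
      refine sum_eq_zero fun m _ => ?_
      by_cases hm : m ∈ I <;> simp [hgI, hxI, hz, hm]
    have := hconv.add_fderiv_sub_le (Set.mem_univ x) (Set.mem_univ z)
      (hdiff x).hasGradientAt.hasFDerivAt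
    rwa [InnerProductSpace.toDual_apply_apply, horth, add_zero] at this
  · by_cases hj : j ∈ I
    · simp [hgI j hj]
    · simpa [hxI j hj, hgI i hi, abs_mul, abs_of_pos hγ] using hact.abs_le hi hj
end

section
/- Let x be a fixed point of the forward-backward operator for min{f(x) : ‖x‖_0 ≤ s} with ‖x‖_0 < s. Then ∇f(x) = 0 and x is a global minimizer of f over {z : ‖z‖_0 ≤ s}. -/
/-!
If `x` is a best `s`-sparse approximation of `v = x - γ∇f(x)` but has fewer than `s` nonzero
entries, then for each coordinate `j` the vector `x` with its `j`-th entry replaced by `v j` is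
still admissible, and its squared distance to `v` is smaller by `(v j - x j)²`. Hence `x = v`,
i.e. `∇f(x) = 0`, and for a convex function a critical point is a global minimiser.
-/

open Set

section SparseApproximation

variable {ι : Type*} [Fintype ι]

lemma EuclideanSpace.norm_sub_single_apply_sq [DecidableEq ι] (w : EuclideanSpace ℝ ι) (j : ι) :
    ‖w - EuclideanSpace.single j (w j)‖ ^ 2 = ‖w‖ ^ 2 - w j ^ 2 := by
  rw [norm_sub_sq_real, PiLp.norm_single, EuclideanSpace.inner_single_right,
    Real.norm_eq_abs, sq_abs]
  simp only [conj_trivial]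
  ring

lemma EuclideanSpace.ncard_support_add_single_le [DecidableEq ι] (x : EuclideanSpace ℝ ι)
    (j : ι) (c : ℝ) :
    {i | (x + EuclideanSpace.single j c) i ≠ 0}.ncard ≤ {i | x i ≠ 0}.ncard + 1 := by
  have hsub : {i | (x + EuclideanSpace.single j c) i ≠ 0} ⊆ insert j {i | x i ≠ 0} := by
    intro i hi
    by_cases hij : i = j
    · exact hij ▸ mem_insert i _
    · simpa [PiLp.single_apply, hij] using hi
  exact (ncard_le_ncard hsub (toFinite _)).trans (ncard_insert_le _ _)

theorem EuclideanSpace.eq_of_forall_norm_sub_le_of_ncard_lt {s : ℕ} {v x : EuclideanSpace ℝ ι}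
    (hbest : ∀ z : EuclideanSpace ℝ ι, {i | z i ≠ 0}.ncard ≤ s → ‖v - x‖ ≤ ‖v - z‖)
    (hlt : {i | x i ≠ 0}.ncard < s) : x = v := by
  classical
  ext j
  set z := x + EuclideanSpace.single j (v j - x j)
  have hz : {i | z i ≠ 0}.ncard ≤ s :=
    (ncard_support_add_single_le x j _).trans (Nat.succ_le_of_lt hlt)
  have hvz : v - z = (v - x) - EuclideanSpace.single j ((v - x) j) := by
    simp only [z, PiLp.sub_apply]
    abel
  have hsq : ‖v - x‖ ^ 2 ≤ ‖v - x‖ ^ 2 - (v - x) j ^ 2 := by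
    rw [← norm_sub_single_apply_sq, ← hvz]
    exact pow_le_pow_left₀ (norm_nonneg _) (hbest z hz) 2
  have hj : (v - x) j = 0 := pow_eq_zero_iff two_ne_zero |>.1 <|
    le_antisymm (by linarith) (sq_nonneg _)
  rw [PiLp.sub_apply, sub_eq_zero] at hj
  exact hj.symm

end SparseApproximation

theorem ConvexOn.isMinOn_univ_of_hasFDerivAt_eq_zero {E : Type*} [NormedAddCommGroup E]
    [NormedSpace ℝ E] {f : E → ℝ} (hf : ConvexOn ℝ univ f) {x : E}
    (hx : HasFDerivAt f (0 : E →L[ℝ] ℝ) x) : IsMinOn f univ x := by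
  intro z _
  have hline : ConvexOn ℝ univ (f ∘ AffineMap.lineMap (k := ℝ) x z) := hf.comp_affineMap _
  have hderiv : HasDerivAt (f ∘ AffineMap.lineMap (k := ℝ) x z) 0 0 := by
    have hx' : HasFDerivAt f (0 : E →L[ℝ] ℝ) (AffineMap.lineMap x z (0 : ℝ)) := by
      simpa using hx
    simpa using hx'.comp_hasDerivAt (0 : ℝ) AffineMap.hasDerivAt_lineMap
  have hslope := hline.le_slope_of_hasDerivAt (mem_univ 0) (mem_univ 1) one_pos hderiv
  simp only [slope_def_field, Function.comp_apply, AffineMap.lineMap_apply_zero,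
    AffineMap.lineMap_apply_one] at hslope
  simpa using hslope

/-- If `x` is a fixed point of the forward-backward operator
`T(x) = P_A(x - γ∇f(x))`, `A = {z : ‖z‖₀ ≤ s}`, with `‖x‖₀ < s`, then `∇f(x) = 0`
and `x` is a global minimiser of `f` over `A`. -/
theorem stmt13 {k s : ℕ} (f : EuclideanSpace ℝ (Fin k) → ℝ)
    (hconv : ConvexOn ℝ Set.univ f) (hdiff : Differentiable ℝ f)
    (γ : ℝ) (hγ : 0 < γ)
    (x : EuclideanSpace ℝ (Fin k))
    (hfix : {i | x i ≠ 0}.ncard ≤ s ∧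
      ∀ z : EuclideanSpace ℝ (Fin k), {i | z i ≠ 0}.ncard ≤ s →
        ‖(x - γ • gradient f x) - x‖ ≤ ‖(x - γ • gradient f x) - z‖)
    (hlt : {i | x i ≠ 0}.ncard < s) :
    gradient f x = 0 ∧
      ∀ z : EuclideanSpace ℝ (Fin k), {i | z i ≠ 0}.ncard ≤ s → f x ≤ f z := by
  have hgrad : gradient f x = 0 := by
    have hstep : x = x - γ • gradient f x :=
      EuclideanSpace.eq_of_forall_norm_sub_le_of_ncard_lt hfix.2 hlt
    exact (smul_eq_zero.1 (sub_eq_self.1 hstep.symm)).resolve_left hγ.ne'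
  have hcrit : HasFDerivAt f (0 : EuclideanSpace ℝ (Fin k) →L[ℝ] ℝ) x := by
    simpa [hgrad] using hasGradientAt_iff_hasFDerivAt.1 (hdiff x).hasGradientAt
  exact ⟨hgrad, fun z _ => hconv.isMinOn_univ_of_hasFDerivAt_eq_zero hcrit (mem_univ z)⟩
end

section
/- Every fixed point x of the forward-backward operator T(x) = P_A(x − γ∇f(x)) for min{f(x) : ‖x‖_0 ≤ s} is a local minimizer of f over A = {z : ‖z‖_0 ≤ s}. -/
/-!
A nearest sparse point `x` of `y` cannot be improved by moving along a coordinate axis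
that keeps it sparse, so `y - x` vanishes on every coordinate `i` with
`‖x‖₀ + [x i = 0] ≤ s`. For `y = x - γ ∇f(x)` this kills those coordinates of `∇f(x)`.
Sparse points `z` close to `x` keep the support of `x`; if that support is full (`‖x‖₀ = s`) it
is exactly the support of `z`. Either way every coordinate of `∇f(x)` or of `z - x` is zero,
so `⟪∇f(x), z - x⟫ = 0` and convexity gives `f x ≤ f z`.
-/

open Set Filter Topology

theorem ConvexOn.add_inner_gradient_le {E : Type*} [NormedAddCommGroup E] [InnerProductSpace ℝ E]
    [CompleteSpace E] {f : E → ℝ} (hf : ConvexOn ℝ univ f) {x : E} (hx : DifferentiableAt ℝ f x)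
    (z : E) : f x + inner ℝ (gradient f x) (z - x) ≤ f z := by
  set φ := f ∘ (AffineMap.lineMap x z : ℝ →ᵃ[ℝ] E)
  have hφ : ConvexOn ℝ univ φ := by
    simpa using hf.comp_affineMap (AffineMap.lineMap x z)
  have hderiv : HasDerivAt φ (inner ℝ (gradient f x) (z - x)) 0 := by
    simpa using hx.hasGradientAt.hasFDerivAt.comp_hasDerivAt_of_eq (0 : ℝ)
      AffineMap.hasDerivAt_lineMap (AffineMap.lineMap_apply_zero _ _).symm
  have hslope := hφ.le_slope_of_hasDerivAt (mem_univ 0) (mem_univ 1) one_pos hderiv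
  simp only [slope_def_field, sub_zero, div_one, φ, Function.comp_apply,
    AffineMap.lineMap_apply_zero, AffineMap.lineMap_apply_one] at hslope
  linarith

namespace EuclideanSpace

variable {ι : Type*} [Fintype ι] {s : ℕ}

theorem apply_eq_zero_of_norm_le_norm_sub_single [DecidableEq ι] {v : EuclideanSpace ℝ ι} {i : ι}
    (h : ‖v‖ ≤ ‖v - single i (v i)‖) : v i = 0 := by
  have hsq := pow_le_pow_left₀ (norm_nonneg _) h 2
  rw [norm_sub_sq_real, inner_single_right, PiLp.norm_single] at hsq
  simp only [conj_trivial, Real.norm_eq_abs, sq_abs] at hsq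
  nlinarith

theorem ncard_support_add_single_le_s15 [DecidableEq ι] (x : EuclideanSpace ℝ ι) (i : ι) (c : ℝ) :
    {j | (x + single i c) j ≠ 0}.ncard ≤ (insert i {j | x j ≠ 0}).ncard := by
  refine ncard_le_ncard (fun j hj => ?_) (toFinite _)
  rcases eq_or_ne j i with rfl | hji
  · exact mem_insert _ _
  · simpa [PiLp.single_apply, hji] using hj

theorem sub_apply_eq_zero_of_forall_sparse_norm_sub_le [DecidableEq ι]
    {x y : EuclideanSpace ℝ ι}
    (hnear : ∀ z : EuclideanSpace ℝ ι, {i | z i ≠ 0}.ncard ≤ s → ‖y - x‖ ≤ ‖y - z‖)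
    {i : ι} (hi : (insert i {j | x j ≠ 0}).ncard ≤ s) : (y - x) i = 0 := by
  apply apply_eq_zero_of_norm_le_norm_sub_single
  rw [← sub_add_eq_sub_sub]
  exact hnear _ ((ncard_support_add_single_le_s15 x i _).trans hi)

theorem eventually_support_subset (x : EuclideanSpace ℝ ι) :
    ∀ᶠ z in 𝓝 x, {i | x i ≠ 0} ⊆ {i | z i ≠ 0} := by
  have hcoord : ∀ i, ∀ᶠ z in 𝓝 x, x i ≠ 0 → z i ≠ 0 := fun i => by
    by_cases hxi : x i = 0
    · simp [hxi]
    · exact ((PiLp.continuous_apply 2 _ i).continuousAt.eventually_ne hxi).mono fun _ h _ => h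
  filter_upwards [eventually_all.2 hcoord] with z hz i hi using hz i hi

theorem apply_eq_zero_of_lt_ncard_insert {x z : EuclideanSpace ℝ ι}
    (hsub : {i | x i ≠ 0} ⊆ {i | z i ≠ 0}) (hz : {i | z i ≠ 0}.ncard ≤ s) {i : ι}
    (hi : s < (insert i {j | x j ≠ 0}).ncard) : z i = 0 := by
  have hxz : {j | x j ≠ 0}.ncard ≤ {j | z j ≠ 0}.ncard := ncard_le_ncard hsub (toFinite _)
  have hxi : i ∉ {j | x j ≠ 0} := fun hxi => by
    rw [insert_eq_of_mem hxi] at hi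
    omega
  rw [ncard_insert_of_notMem hxi (toFinite _)] at hi
  have hsupp : {j | x j ≠ 0} = {j | z j ≠ 0} :=
    eq_of_subset_of_ncard_le hsub (by omega) (toFinite _)
  simpa [hsupp] using hxi

theorem inner_sub_eq_zero_of_sparse {v x z : EuclideanSpace ℝ ι}
    (hv : ∀ i, (insert i {j | x j ≠ 0}).ncard ≤ s → v i = 0)
    (hsub : {i | x i ≠ 0} ⊆ {i | z i ≠ 0}) (hz : {i | z i ≠ 0}.ncard ≤ s) :
    inner ℝ v (z - x) = 0 := by
  rw [PiLp.inner_apply]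
  refine Finset.sum_eq_zero fun i _ => ?_
  rcases le_or_gt (insert i {j | x j ≠ 0}).ncard s with hi | hi
  · simp [hv i hi]
  · have hzi := apply_eq_zero_of_lt_ncard_insert hsub hz hi
    have hxi : x i = 0 := by_contra fun hxi => hsub hxi hzi
    simp [hzi, hxi]

end EuclideanSpace

theorem stmt15_general {k s : ℕ} (f : EuclideanSpace ℝ (Fin k) → ℝ)
    (hconv : ConvexOn ℝ Set.univ f) (hdiff : Differentiable ℝ f)
    (γ : ℝ) (hγ0 : 0 < γ)
    (x : EuclideanSpace ℝ (Fin k))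
    (hfix : {i | x i ≠ 0}.ncard ≤ s ∧
      ∀ z : EuclideanSpace ℝ (Fin k), {i | z i ≠ 0}.ncard ≤ s →
        ‖(x - γ • gradient f x) - x‖ ≤ ‖(x - γ • gradient f x) - z‖) :
    ∃ δ > (0 : ℝ), ∀ z : EuclideanSpace ℝ (Fin k),
      {i | z i ≠ 0}.ncard ≤ s → ‖z - x‖ ≤ δ → f x ≤ f z := by
  have hgrad : ∀ i, (insert i {j | x j ≠ 0}).ncard ≤ s → gradient f x i = 0 := fun i hi => by
    simpa [hγ0.ne'] using
      EuclideanSpace.sub_apply_eq_zero_of_forall_sparse_norm_sub_le hfix.2 hi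
  obtain ⟨δ, hδ, hball⟩ := Metric.nhds_basis_closedBall.eventually_iff.1
    (EuclideanSpace.eventually_support_subset x)
  refine ⟨δ, hδ, fun z hz hzx => ?_⟩
  have hsub := hball (by rwa [Metric.mem_closedBall, dist_eq_norm])
  have horth := EuclideanSpace.inner_sub_eq_zero_of_sparse hgrad hsub hz
  linarith [hconv.add_inner_gradient_le (hdiff x) z]

/-- Every fixed point `x` of the forward-backward operator
`T(x) = P_A(x - γ∇f(x))` for `min {f(x) : ‖x‖₀ ≤ s}` is a local minimiser of `f`
over `A = {z : ‖z‖₀ ≤ s}`. -/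
theorem stmt15 {k s : ℕ} (f : EuclideanSpace ℝ (Fin k) → ℝ)
    (hconv : ConvexOn ℝ Set.univ f) (hdiff : Differentiable ℝ f)
    (L : NNReal) (hL : 0 < (L : ℝ)) (hlip : LipschitzWith L (gradient f))
    (γ : ℝ) (hγ0 : 0 < γ) (hγ2 : γ < 2 / L)
    (x : EuclideanSpace ℝ (Fin k))
    (hfix : {i | x i ≠ 0}.ncard ≤ s ∧
      ∀ z : EuclideanSpace ℝ (Fin k), {i | z i ≠ 0}.ncard ≤ s →
        ‖(x - γ • gradient f x) - x‖ ≤ ‖(x - γ • gradient f x) - z‖) :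
    ∃ δ > (0 : ℝ), ∀ z : EuclideanSpace ℝ (Fin k),
      {i | z i ≠ 0}.ncard ≤ s → ‖z - x‖ ≤ δ → f x ≤ f z :=
  stmt15_general f hconv hdiff γ hγ0 x hfix
end

section
/- Let x be a fixed point of the forward-backward operator T for min{f(x) : ‖x‖_0 ≤ s}. If either ∇f(x) = 0, or σ_s(x) > γ‖∇f(x)‖_∞ (where σ_s(x) is the s-th largest entry of x in magnitude), then x is a strong fixed point: T(x) = {x}. -/
/-!
Write `y = x - γ∇f(x)`. If `∇f(x) = 0` then `y = x` is itself `s`-sparse, hence its own unique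
best `s`-sparse approximation. A best `s`-sparse approximation of `y` agrees with `y` on its support
`S`, so its squared distance to `y` is the tail `∑_{i ∉ S} y_i²`. Applied to `x`, whose support
is `I` by the hypothesis, this gives `∇f(x) = 0` on `I`; hence `|y_i| = |x_i|` on `I` and
`|y_j| = γ|∇f(x)_j|` off `I`, so the entries of `y` on `I` strictly dominate all the others.
Any other support of size at most `s` then leaves a strictly larger tail, so every best
approximation has support `I` and equals `x`.
-/

open Finset

theorem Finset.sum_lt_sum_of_card_le_of_forall_lt {ι M : Type*} [DecidableEq ι] [AddCommMonoid M]
    [LinearOrder M] [IsOrderedCancelAddMonoid M] {S I : Finset ι} (f : ι → M)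
    (hcard : #S ≤ #I) (hne : S ≠ I) (hpos : ∀ i ∈ I, 0 < f i)
    (hgap : ∀ i ∈ I, ∀ j ∉ I, f j < f i) :
    ∑ i ∈ S, f i < ∑ i ∈ I, f i := by
  have hIS : (I \ S).Nonempty :=
    sdiff_nonempty.2 fun h => hne (eq_of_subset_of_card_le h hcard).symm
  obtain ⟨m, hm, hmin⟩ := (I \ S).exists_min_image f hIS
  have hsdiff : ∑ i ∈ S \ I, f i < ∑ i ∈ I \ S, f i := by
    rcases (S \ I).eq_empty_or_nonempty with hSI | hSI
    · rw [hSI, sum_empty]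
      exact sum_pos (fun i hi => hpos i (mem_sdiff.1 hi).1) hIS
    · calc ∑ i ∈ S \ I, f i < ∑ _i ∈ S \ I, f m :=
            sum_lt_sum_of_nonempty hSI fun j hj =>
              hgap m (mem_sdiff.1 hm).1 j (mem_sdiff.1 hj).2
        _ = #(S \ I) • f m := sum_const _
        _ ≤ #(I \ S) • f m :=
            nsmul_le_nsmul_left (hpos m (mem_sdiff.1 hm).1).le
              (card_sdiff_le_card_sdiff_iff.2 hcard)
        _ ≤ ∑ i ∈ I \ S, f i := card_nsmul_le_sum _ _ _ hmin
  rw [← sum_inter_add_sum_sdiff S I, ← sum_inter_add_sum_sdiff I S, inter_comm]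
  gcongr

theorem Set.ncard_setOf_ne_zero_le {ι M : Type*} [Zero M] {x : ι → M} {S : Finset ι}
    (hx : ∀ i ∉ S, x i = 0) : {i | x i ≠ 0}.ncard ≤ #S := by
  rw [← Set.ncard_coe_finset]
  exact Set.ncard_le_ncard (fun i hi => by_contra fun h => hi (hx i h)) S.finite_toSet

theorem eq_zero_of_ncard_setOf_ne_zero_le {ι M : Type*} [Finite ι] [Zero M] {x : ι → M}
    {I : Finset ι} (hI : ∀ i ∈ I, x i ≠ 0) (hcard : {i | x i ≠ 0}.ncard ≤ #I) {j : ι}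
    (hj : j ∉ I) : x j = 0 := by
  classical
  by_contra hxj
  have hsub : ↑(insert j I) ⊆ {i | x i ≠ 0} := by
    simpa [Set.insert_subset_iff] using ⟨hxj, hI⟩
  have := (Set.ncard_coe_finset _ ▸ Set.ncard_le_ncard hsub).trans hcard
  rw [card_insert_of_notMem hj] at this
  omega

section SparseApproximation

variable {ι : Type*} [Fintype ι] {s : ℕ} {y z : EuclideanSpace ℝ ι}

/-- `z ∈ P_A(y)` for `A = {z : ‖z‖₀ ≤ s}`. -/
def IsBestSparseApprox (s : ℕ) (y z : EuclideanSpace ℝ ι) : Prop :=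
  {i | z i ≠ 0}.ncard ≤ s ∧
    ∀ w : EuclideanSpace ℝ ι, {i | w i ≠ 0}.ncard ≤ s → ‖y - z‖ ≤ ‖y - w‖

theorem IsBestSparseApprox.eq_of_sparse (hz : IsBestSparseApprox s y z)
    (hy : {i | y i ≠ 0}.ncard ≤ s) : z = y := by
  have := hz.2 y hy
  rw [sub_self, norm_zero, norm_le_zero_iff, sub_eq_zero] at this
  exact this.symm

variable [DecidableEq ι]

theorem EuclideanSpace.norm_sub_sq_eq_of_eq_zero {S : Finset ι} (hz : ∀ i ∉ S, z i = 0) :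
    ‖y - z‖ ^ 2 = ∑ i ∈ S, (y i - z i) ^ 2 + ∑ i ∈ Sᶜ, y i ^ 2 := by
  rw [EuclideanSpace.real_norm_sq_eq, ← sum_add_sum_compl S]
  congr 1
  exact sum_congr rfl fun i hi => by simp [hz i (mem_compl.1 hi)]

theorem EuclideanSpace.sum_compl_sq_le_norm_sub_sq {S : Finset ι} (hz : ∀ i ∉ S, z i = 0) :
    ∑ i ∈ Sᶜ, y i ^ 2 ≤ ‖y - z‖ ^ 2 := by
  rw [norm_sub_sq_eq_of_eq_zero hz]
  exact le_add_of_nonneg_left (sum_nonneg fun i _ => sq_nonneg _)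

namespace IsBestSparseApprox

theorem apply_eq_of_mem (hz : IsBestSparseApprox s y z) {S : Finset ι} (hS : #S ≤ s)
    (hzS : ∀ i ∉ S, z i = 0) {i : ι} (hi : i ∈ S) : z i = y i := by
  set w : EuclideanSpace ℝ ι := WithLp.toLp 2 fun j => if j ∈ S then y j else 0
  have hwS : ∀ j ∉ S, w j = 0 := fun j hj => if_neg hj
  have hle : ‖y - z‖ ^ 2 ≤ ‖y - w‖ ^ 2 := by
    gcongr
    exact hz.2 w ((Set.ncard_setOf_ne_zero_le hwS).trans hS)
  have hyw : ∑ j ∈ S, (y j - w j) ^ 2 = 0 := sum_eq_zero fun j hj => by simp [w, hj]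
  rw [EuclideanSpace.norm_sub_sq_eq_of_eq_zero hzS, EuclideanSpace.norm_sub_sq_eq_of_eq_zero hwS,
    hyw, zero_add, add_le_iff_nonpos_left] at hle
  have := (sum_eq_zero_iff_of_nonneg fun j _ => sq_nonneg (y j - z j)).1
    (hle.antisymm (sum_nonneg fun j _ => sq_nonneg _)) i hi
  rw [sq_eq_zero_iff, sub_eq_zero] at this
  exact this.symm

theorem eq_of_forall_abs_lt {x : EuclideanSpace ℝ ι} (hx : IsBestSparseApprox s y x)
    (hz : IsBestSparseApprox s y z) {I : Finset ι} (hI : #I = s) (hxI : ∀ j ∉ I, x j = 0)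
    (hyI : ∀ i ∈ I, y i ≠ 0) (hgap : ∀ i ∈ I, ∀ j ∉ I, |y j| < |y i|) : z = x := by
  classical
  set S : Finset ι := {i | z i ≠ 0}
  have hS : #S ≤ s := by
    simpa [S, ← Set.ncard_coe_finset] using hz.1
  have hzS : ∀ i ∉ S, z i = 0 := by simp [S]
  have hxy : ∀ i ∈ I, x i = y i := fun i hi => hx.apply_eq_of_mem hI.le hxI hi
  have hle : ∑ i ∈ Sᶜ, y i ^ 2 ≤ ∑ i ∈ Iᶜ, y i ^ 2 :=
    calc ∑ i ∈ Sᶜ, y i ^ 2 ≤ ‖y - z‖ ^ 2 := EuclideanSpace.sum_compl_sq_le_norm_sub_sq hzS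
      _ ≤ ‖y - x‖ ^ 2 := by gcongr; exact hz.2 x hx.1
      _ = ∑ i ∈ Iᶜ, y i ^ 2 := by
        rw [EuclideanSpace.norm_sub_sq_eq_of_eq_zero hxI, sum_eq_zero fun i hi => by simp [hxy i hi],
          zero_add]
  have hSI : S = I := by
    by_contra hne
    have := sum_lt_sum_of_card_le_of_forall_lt (fun i => y i ^ 2) (hS.trans hI.ge) hne
      (fun i hi => by positivity [hyI i hi]) fun i hi j hj => sq_lt_sq.2 (hgap i hi j hj)
    linarith [sum_add_sum_compl S fun i => y i ^ 2, sum_add_sum_compl I fun i => y i ^ 2]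
  ext i
  by_cases hi : i ∈ I
  · rw [hz.apply_eq_of_mem hS hzS (hSI ▸ hi), hxy i hi]
  · rw [hzS i (hSI ▸ hi), hxI i hi]

end IsBestSparseApprox

end SparseApproximation

theorem stmt16_general {k s : ℕ} (f : EuclideanSpace ℝ (Fin k) → ℝ)
    (γ : ℝ) (hγ : 0 < γ)
    (T : EuclideanSpace ℝ (Fin k) → Set (EuclideanSpace ℝ (Fin k)))
    (hT : ∀ y, T y = {z | {i | z i ≠ 0}.ncard ≤ s ∧
      ∀ w : EuclideanSpace ℝ (Fin k), {i | w i ≠ 0}.ncard ≤ s →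
        ‖(y - γ • gradient f y) - z‖ ≤ ‖(y - γ • gradient f y) - w‖})
    (x : EuclideanSpace ℝ (Fin k)) (hfix : x ∈ T x)
    (hcond : gradient f x = 0 ∨
      ∃ I : Finset (Fin k), I.card = s ∧ ∀ i ∈ I, ∀ j, γ * |gradient f x j| < |x i|) :
    T x = {x} := by
  have hT' : ∀ y, T y = {z | IsBestSparseApprox s (y - γ • gradient f y) z} := hT
  rw [hT'] at hfix ⊢
  refine Set.eq_singleton_iff_unique_mem.2 ⟨hfix, fun z hz => ?_⟩
  rcases hcond with hg | ⟨I, hI, hgap⟩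
  · rw [hg, smul_zero, sub_zero] at hfix hz
    exact hz.eq_of_sparse hfix.1
  have hxI : ∀ i ∈ I, x i ≠ 0 := fun i hi =>
    abs_pos.1 ((hgap i hi i).trans_le' (by positivity))
  have hsupp : ∀ j ∉ I, x j = 0 := fun j hj =>
    eq_zero_of_ncard_setOf_ne_zero_le hxI (hI ▸ hfix.1) hj
  have hyI : ∀ i ∈ I, (x - γ • gradient f x) i = x i := fun i hi =>
    (hfix.apply_eq_of_mem hI.le hsupp hi).symm
  refine hfix.eq_of_forall_abs_lt hz hI hsupp (fun i hi => hyI i hi ▸ hxI i hi)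
    fun i hi j hj => ?_
  simpa [hyI i hi, hsupp j hj, abs_mul, abs_of_pos hγ] using hgap i hi j

/-- Let `x` be a fixed point of the forward-backward operator
`T(y) = P_A(y - γ∇f(y))`, `A = {z : ‖z‖₀ ≤ s}`. If either `∇f(x) = 0` or
`σ_s(x) > γ‖∇f(x)‖_∞` (there are `s` coordinates of `x` whose magnitude strictly
exceeds `γ‖∇f(x)‖_∞`), then `x` is a strong fixed point: `T(x) = {x}`. -/
theorem stmt16 {k s : ℕ} (f : EuclideanSpace ℝ (Fin k) → ℝ)
    (hconv : ConvexOn ℝ Set.univ f) (hdiff : Differentiable ℝ f)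
    (γ : ℝ) (hγ : 0 < γ)
    (T : EuclideanSpace ℝ (Fin k) → Set (EuclideanSpace ℝ (Fin k)))
    (hT : ∀ y, T y = {z | {i | z i ≠ 0}.ncard ≤ s ∧
      ∀ w : EuclideanSpace ℝ (Fin k), {i | w i ≠ 0}.ncard ≤ s →
        ‖(y - γ • gradient f y) - z‖ ≤ ‖(y - γ • gradient f y) - w‖})
    (x : EuclideanSpace ℝ (Fin k)) (hfix : x ∈ T x)
    (hcond : gradient f x = 0 ∨
      ∃ I : Finset (Fin k), I.card = s ∧ ∀ i ∈ I, ∀ j, γ * |gradient f x j| < |x i|) :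
    T x = {x} :=
  stmt16_general f γ hγ T hT x hfix hcond
end
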